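/- arXiv:1808.03268 — 2 statements merged into one kernel-verified Lean document; each statement's English description precedes it below -/
import Mathlib

section
/- Let I, K be ideals on a set S with the property AP(I,K): for every sequence (A_n)_{n∈ℕ} of sets in I there is A ∈ I with A_n ∖ A ∈ K for all n. Let P be a PM space and suppose the strong neighborhood filter at p has a countable base. If f : S → P is strong-I-convergent to p, then f is strong-I^K-convergent to p. -/
open Set
open scoped Classical

/-- A probabilistic metric space, encoded via the family of distance
distribution functions `F a b : ℝ → ℝ`, with the axioms needed for the
strong topology: `F a a = ε₀`, separation of distinct points, symmetry,
and the consequence of continuity of the triangle function `τ`. -/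
structure PMSpace (P : Type*) where
  F : P → P → ℝ → ℝ
  self_one : ∀ a : P, ∀ t : ℝ, 0 < t → F a a t = 1
  ne_sep : ∀ a b : P, a ≠ b → ∃ t : ℝ, 0 < t ∧ F a b t ≤ 1 - t
  symm : ∀ a b : P, ∀ t : ℝ, F a b t = F b a t
  triangle : ∀ t : ℝ, 0 < t → ∃ η : ℝ, 0 < η ∧
    ∀ a b c : P, 1 - η < F a b η → 1 - η < F b c η → 1 - t < F a c t

/-- The strong `t`-neighborhood `N_p(t) = {q : F_{pq}(t) > 1 - t}`. -/
def PMSpace.Nbhd {P : Type*} (M : PMSpace P) (p : P) (t : ℝ) : Set P :=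
  {q | 1 - t < M.F p q t}

/-- An ideal of subsets of `S`. -/
def IsIdeal {S : Type*} (I : Set (Set S)) : Prop :=
  ∅ ∈ I ∧ (∀ A ∈ I, ∀ B, B ⊆ A → B ∈ I) ∧ (∀ A ∈ I, ∀ B ∈ I, A ∪ B ∈ I)

/-- An admissible ideal: contains all singletons and is nontrivial. -/
def IsAdmissibleIdeal {S : Type*} (I : Set (Set S)) : Prop :=
  IsIdeal I ∧ (∀ s : S, {s} ∈ I) ∧ Set.univ ∉ I

/-- The ideal `I ∨ K = {A ∪ B : A ∈ I, B ∈ K}`. -/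
def IdealJoin {S : Type*} (I K : Set (Set S)) : Set (Set S) :=
  {C | ∃ A ∈ I, ∃ B ∈ K, C = A ∪ B}

/-- The trace ideal `K|_A = {C ∩ A : C ∈ K}`. -/
def TraceIdeal {S : Type*} (K : Set (Set S)) (A : Set S) : Set (Set S) :=
  {B | ∃ C ∈ K, B = C ∩ A}

/-- `f` is strong-`K`-convergent to `p`. -/
def StrongConv {S P : Type*} (M : PMSpace P) (K : Set (Set S)) (f : S → P) (p : P) : Prop :=
  ∀ t : ℝ, 0 < t → {s | f s ∉ M.Nbhd p t} ∈ K

/-- `f` is strong-`I^K`-convergent to `p`: there is `A` with `Aᶜ ∈ I`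
(i.e. `A ∈ F(I)`) such that the modification of `f`, equal to `p` off `A`,
is strong-`K`-convergent to `p`. -/
def StrongIKConv {S P : Type*} (M : PMSpace P) (I K : Set (Set S)) (f : S → P) (p : P) : Prop :=
  ∃ A : Set S, Aᶜ ∈ I ∧ StrongConv M K (fun s => if s ∈ A then f s else p) p

/-- `f` is strong-`I`-Cauchy. -/
def StrongCauchy {S P : Type*} (M : PMSpace P) (I : Set (Set S)) (f : S → P) : Prop :=
  ∀ t : ℝ, 0 < t → ∃ m : S, {s | f s ∉ M.Nbhd (f m) t} ∈ I

/-- `f` is strong-`I^K`-Cauchy: there is `A ∈ F(I)` such that `f|_A` is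
strong-`K|_A`-Cauchy. -/
def StrongIKCauchy {S P : Type*} (M : PMSpace P) (I K : Set (Set S)) (f : S → P) : Prop :=
  ∃ A : Set S, Aᶜ ∈ I ∧ ∀ t : ℝ, 0 < t → ∃ m ∈ A,
    {s ∈ A | f s ∉ M.Nbhd (f m) t} ∈ TraceIdeal K A

/-- The strong topology on a PM space, generated by strong neighborhoods. -/
def strongTopology {P : Type*} (M : PMSpace P) : TopologicalSpace P :=
  TopologicalSpace.generateFrom {U | ∃ p : P, ∃ t : ℝ, 0 < t ∧ U = M.Nbhd p t}

/-!
AP(I,K) applied to the exceptional sets `{s | f s ∉ N_p(tₙ)} ∈ I` of the countable base gives one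
`B ∈ I` that `K`-almost contains all of them. Replacing `f` by `p` on `B` only shrinks exceptional
sets to `{s | f s ∉ N_p(tₙ)} \ B ∈ K`, since `p` lies in each of its own strong neighborhoods.
-/

open Set

theorem PMSpace.mem_nbhd_self {P : Type*} (M : PMSpace P) (p : P) {t : ℝ} (ht : 0 < t) :
    p ∈ M.Nbhd p t := by
  simp [PMSpace.Nbhd, M.self_one p t ht, ht]

theorem IsIdeal.mem_of_subset {S : Type*} {K : Set (Set S)} (hK : IsIdeal K) {A B : Set S}
    (hA : A ∈ K) (hBA : B ⊆ A) : B ∈ K :=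
  hK.2.1 A hA B hBA

theorem setOf_ite_notMem_subset {S P : Type*} (f : S → P) (p : P) (A : Set S) {U : Set P}
    (hp : p ∈ U) :
    {s | (if s ∈ A then f s else p) ∉ U} ⊆ {s | f s ∉ U} ∩ A := by
  intro s hs
  by_cases hsA : s ∈ A
  · simp only [mem_ofPred_eq, hsA, if_true] at hs
    exact ⟨hs, hsA⟩
  · simp [hsA, hp] at hs

theorem strongConv_of_nbhd_base {S P : Type*} (M : PMSpace P) {K : Set (Set S)} (hK : IsIdeal K)
    {g : S → P} {p : P} {ts : ℕ → ℝ}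
    (hbase : ∀ t : ℝ, 0 < t → ∃ n, M.Nbhd p (ts n) ⊆ M.Nbhd p t)
    (hg : ∀ n, {s | g s ∉ M.Nbhd p (ts n)} ∈ K) : StrongConv M K g p := by
  intro t ht
  obtain ⟨n, hn⟩ := hbase t ht
  exact hK.mem_of_subset (hg n) fun s hs hmem => hs (hn hmem)

theorem stmt11_general {S P : Type*} (M : PMSpace P) (I K : Set (Set S))
    (hK : IsIdeal K)
    (hAP : ∀ A : ℕ → Set S, (∀ n, A n ∈ I) → ∃ B ∈ I, ∀ n, A n \ B ∈ K)
    (f : S → P) (p : P)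
    (hbase : ∃ ts : ℕ → ℝ, (∀ n, 0 < ts n) ∧
      ∀ t : ℝ, 0 < t → ∃ n, M.Nbhd p (ts n) ⊆ M.Nbhd p t)
    (h : StrongConv M I f p) : StrongIKConv M I K f p := by
  obtain ⟨ts, hts, hbase⟩ := hbase
  obtain ⟨B, hB, hBK⟩ := hAP (fun n => {s | f s ∉ M.Nbhd p (ts n)}) fun n => h _ (hts n)
  refine ⟨Bᶜ, (compl_compl B).symm ▸ hB, strongConv_of_nbhd_base M hK hbase fun n => ?_⟩
  exact hK.mem_of_subset (hBK n)
    (setOf_ite_notMem_subset f p Bᶜ (M.mem_nbhd_self p (hts n)))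

theorem stmt11 {S P : Type*} (M : PMSpace P) (I K : Set (Set S))
    (hI : IsIdeal I) (hK : IsIdeal K)
    (hAP : ∀ A : ℕ → Set S, (∀ n, A n ∈ I) → ∃ B ∈ I, ∀ n, A n \ B ∈ K)
    (f : S → P) (p : P)
    (hbase : ∃ ts : ℕ → ℝ, (∀ n, 0 < ts n) ∧
      ∀ t : ℝ, 0 < t → ∃ n, M.Nbhd p (ts n) ⊆ M.Nbhd p t)
    (h : StrongConv M I f p) : StrongIKConv M I K f p :=
  stmt11_general M I K hK hAP f p hbase h
end

section
/- Let I, K be ideals on a set S with I ∨ K = {A ∪ B : A ∈ I, B ∈ K} nontrivial, and let P be a PM space. A function f : S → P is strong-I^K-Cauchy if and only if f is strong-(I ∨ K)^K-Cauchy. -/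
open Set
open scoped Classical

namespace IsIdeal

variable {S : Type*} {K : Set (Set S)}

theorem sep_mem_traceIdeal_iff (hK : IsIdeal K) {A : Set S} {p : S → Prop} :
    {s ∈ A | p s} ∈ TraceIdeal K A ↔ {s ∈ A | p s} ∈ K := by
  constructor
  · rintro ⟨C, hC, hCA⟩
    exact hK.2.1 C hC _ (hCA ▸ inter_subset_left)
  · intro h
    exact ⟨_, h, (inter_eq_left.mpr (sep_subset A p)).symm⟩

end IsIdeal

theorem subset_idealJoin_left {S : Type*} {I K : Set (Set S)} (hK0 : ∅ ∈ K) :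
    I ⊆ IdealJoin I K :=
  fun A hA => ⟨A, hA, ∅, hK0, (union_empty A).symm⟩

section Cauchy

variable {S P : Type*} (M : PMSpace P) (K : Set (Set S)) (f : S → P)

def StrongTraceCauchy (A : Set S) : Prop :=
  ∀ t : ℝ, 0 < t → ∃ m ∈ A, {s ∈ A | f s ∉ M.Nbhd (f m) t} ∈ TraceIdeal K A

variable {M K f}

theorem strongIKCauchy_iff {I : Set (Set S)} :
    StrongIKCauchy M I K f ↔ ∃ A : Set S, Aᶜ ∈ I ∧ StrongTraceCauchy M K f A :=
  Iff.rfl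

theorem StrongIKCauchy.mono_left {I J : Set (Set S)} (hIJ : I ⊆ J)
    (h : StrongIKCauchy M I K f) : StrongIKCauchy M J K f :=
  let ⟨A, hA, hcau⟩ := h
  ⟨A, hIJ hA, hcau⟩

theorem StrongTraceCauchy.mono (hK : IsIdeal K) {A B : Set S} (hAB : A ⊆ B) (hBA : B \ A ∈ K)
    (h : StrongTraceCauchy M K f A) : StrongTraceCauchy M K f B := by
  intro t ht
  obtain ⟨m, hm, hsep⟩ := h t ht
  refine ⟨m, hAB hm, ?_⟩
  rw [hK.sep_mem_traceIdeal_iff] at hsep ⊢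
  refine hK.2.1 _ (hK.2.2 _ hsep _ hBA) _ ?_
  rintro s ⟨hsB, hsN⟩
  by_cases hsA : s ∈ A
  · exact Or.inl ⟨hsA, hsN⟩
  · exact Or.inr ⟨hsB, hsA⟩

end Cauchy

theorem stmt16_general {S P : Type*} (M : PMSpace P) (I K : Set (Set S))
    (hK : IsIdeal K)
    (f : S → P) :
    StrongIKCauchy M I K f ↔ StrongIKCauchy M (IdealJoin I K) K f := by
  refine ⟨StrongIKCauchy.mono_left (subset_idealJoin_left hK.1), ?_⟩
  rw [strongIKCauchy_iff, strongIKCauchy_iff]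
  rintro ⟨A, ⟨B, hB, C, hC, hABC⟩, hcau⟩
  have hAB : A ⊆ Bᶜ := subset_compl_comm.mp (hABC ▸ subset_union_left)
  have hBA : Bᶜ \ A ⊆ C := fun s ⟨hsB, hsA⟩ =>
    (show s ∈ B ∪ C from hABC ▸ hsA).resolve_left hsB
  exact ⟨Bᶜ, by rwa [compl_compl], hcau.mono hK hAB (hK.2.1 C hC _ hBA)⟩

theorem stmt16 {S P : Type*} (M : PMSpace P) (I K : Set (Set S))
    (hI : IsIdeal I) (hK : IsIdeal K) (hnt : Set.univ ∉ IdealJoin I K)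
    (f : S → P) :
    StrongIKCauchy M I K f ↔ StrongIKCauchy M (IdealJoin I K) K f :=
  stmt16_general M I K hK f
end
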